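/- arXiv:1201.2467 — 10 statements merged into one kernel-verified Lean document; each statement's English description precedes it below -/
import Mathlib

section
/- In the 2×2 symmetric game with payoff matrix U = [[-1,0],[0,-1]], the strategy p = (1/2,1/2) is an ESS, but p is not robust against the two simultaneous mutations r¹ = (1/4,3/4) and r² = (3/4,1/4): for every ε ∈ (0,1/2), u(p, εr¹ + εr² + (1-2ε)p) = u(r¹, εr¹ + εr² + (1-2ε)p). -/
open Finset Set

noncomputable section

/-- The probability simplex in ℝᵏ. -/
def Δ' (k : ℕ) : Set (Fin k → ℝ) := stdSimplex ℝ (Fin k)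

/-- Affine payoff determined by the matrix `U`. -/
def payoff {k : ℕ} (U : Fin k → Fin k → ℝ) (p q : Fin k → ℝ) : ℝ :=
  ∑ i, ∑ j, p i * q j * U i j

/-- The pure strategy `eⁱ`. -/
def pure' {k : ℕ} (i : Fin k) : Fin k → ℝ := fun j => if j = i then 1 else 0

/-- Population state when mutations `r i` appear in proportions `ε i` against incumbent `p`. -/
def mix {k m : ℕ} (p : Fin k → ℝ) (r : Fin m → Fin k → ℝ) (ε : Fin m → ℝ) : Fin k → ℝ :=
  fun j => (∑ i, ε i * r i j) + (1 - ∑ i, ε i) * p j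

/-- Evolutionarily stable strategy (ESS). -/
def IsESS {k : ℕ} (U : Fin k → Fin k → ℝ) (p : Fin k → ℝ) : Prop :=
  p ∈ Δ' k ∧ ∀ r ∈ Δ' k, r ≠ p → ∃ e ∈ Set.Ioo (0:ℝ) 1, ∀ ε : ℝ, 0 < ε → ε ≤ e →
    payoff U p (fun j => ε * r j + (1 - ε) * p j) >
      payoff U r (fun j => ε * r j + (1 - ε) * p j)

/-- Evolutionary stability against `m` mutations. -/
def StableAgainst {k : ℕ} (U : Fin k → Fin k → ℝ) (m : ℕ) (p : Fin k → ℝ) : Prop :=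
  ∀ r : Fin m → Fin k → ℝ, (∀ i, r i ∈ Δ' k) → (∀ i, r i ≠ p) →
    ∃ e ∈ Set.Ioo (0:ℝ) 1, ∀ ε : Fin m → ℝ, (∀ i, ε i ∈ Set.Ioc (0:ℝ) e) →
      ∀ i, payoff U p (mix p r ε) > payoff U (r i) (mix p r ε)

/-- `e` is a uniform invasion barrier for `p` against `m` mutations. -/
def UniformBarrier {k : ℕ} (U : Fin k → Fin k → ℝ) (m : ℕ) (p : Fin k → ℝ) (e : ℝ) : Prop :=
  ∀ r : Fin m → Fin k → ℝ, (∀ i, r i ∈ Δ' k) → (∀ i, r i ≠ p) →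
    ∀ ε : Fin m → ℝ, (∀ i, ε i ∈ Set.Ioc (0:ℝ) e) →
      ∀ i, payoff U p (mix p r ε) > payoff U (r i) (mix p r ε)

/-- Best responses to `p`. -/
def BR {k : ℕ} (U : Fin k → Fin k → ℝ) (p : Fin k → ℝ) : Set (Fin k → ℝ) :=
  {q ∈ Δ' k | ∀ r ∈ Δ' k, payoff U r p ≤ payoff U q p}

/-- Local dominance. -/
def LocallyDominant {k : ℕ} (U : Fin k → Fin k → ℝ) (p : Fin k → ℝ) : Prop :=
  ∃ V ∈ nhdsWithin p (Δ' k), V ⊆ Δ' k ∧ ∀ s ∈ V, s ≠ p → ∀ r ∈ V, r ≠ p →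
    payoff U p r ≥ payoff U s r ∧ payoff U p r > payoff U r r

/-- Strict local dominance. -/
def StrictlyLocallyDominant {k : ℕ} (U : Fin k → Fin k → ℝ) (p : Fin k → ℝ) : Prop :=
  ∃ V ∈ nhdsWithin p (Δ' k), V ⊆ Δ' k ∧ ∀ s ∈ V, s ≠ p → ∀ r ∈ V, r ≠ p →
    payoff U p r > payoff U s r

/-! With `U = -I` every strategy earns `-1/k` against the barycenter `p` of the simplex, and against
the post-entry state `p + ε (r - p)` a mutant `r` earns `ε |r - p|²` less than `p`, so `p` is an ESS.
The mutants `r¹` and `r²` are mirror images about `p`, so entering together in equal shares they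
leave the population state at `p`, against which `r¹` does exactly as well as `p`. -/

open Matrix

section Bilinear

variable {k : ℕ} (U : Matrix (Fin k) (Fin k) ℝ)

theorem payoff_eq_dotProduct_mulVec (p q : Fin k → ℝ) : payoff U p q = p ⬝ᵥ (U *ᵥ q) := by
  simp only [payoff, dotProduct, mulVec, Finset.mul_sum]
  exact Finset.sum_congr rfl fun i _ => Finset.sum_congr rfl fun j _ => by ring

variable {U} {p : Fin k → ℝ}

theorem isESS_of_indifferent_of_neg (hp : p ∈ Δ' k)
    (hindiff : ∀ r ∈ Δ' k, payoff U r p = payoff U p p)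
    (hneg : ∀ r ∈ Δ' k, r ≠ p → payoff U (r - p) (r - p) < 0) : IsESS U p := by
  refine ⟨hp, fun r hr hne => ⟨1 / 2, by norm_num, fun ε hε _ => ?_⟩⟩
  have hstate : (fun j => ε * r j + (1 - ε) * p j) = p + ε • (r - p) := by
    funext j; simp only [Pi.add_apply, Pi.smul_apply, Pi.sub_apply, smul_eq_mul]; ring
  have hgap : payoff U p (p + ε • (r - p)) - payoff U r (p + ε • (r - p)) =
      (payoff U p p - payoff U r p) - ε * payoff U (r - p) (r - p) := by
    simp only [payoff_eq_dotProduct_mulVec, mulVec_add, mulVec_smul, dotProduct_add,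
      dotProduct_smul, sub_dotProduct, smul_eq_mul]
    ring
  rw [hstate, gt_iff_lt, ← sub_pos, hgap, hindiff r hr, sub_self, zero_sub, neg_pos]
  exact mul_neg_of_pos_of_neg hε (hneg r hr hne)

theorem payoff_two_mutants_eq_of_indifferent
    (hindiff : ∀ r ∈ Δ' k, payoff U r p = payoff U p p) {r₁ r₂ : Fin k → ℝ} (hr₁ : r₁ ∈ Δ' k)
    (hsymm : r₁ + r₂ = (2 : ℝ) • p) (ε : ℝ) :
    payoff U p (fun j => ε * r₁ j + ε * r₂ j + (1 - 2 * ε) * p j) =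
      payoff U r₁ (fun j => ε * r₁ j + ε * r₂ j + (1 - 2 * ε) * p j) := by
  have hstate : (fun j => ε * r₁ j + ε * r₂ j + (1 - 2 * ε) * p j) = p := by
    funext j
    have hj := congrFun hsymm j
    simp only [Pi.add_apply, Pi.smul_apply, smul_eq_mul] at hj
    linear_combination ε * hj
  rw [hstate, hindiff r₁ hr₁]

end Bilinear

section NegIdentity

variable {k : ℕ}

-- The ascriptions `(-1 : Matrix _ _ ℝ)` matter: at the bare type `Fin k → Fin k → ℝ` of `payoff`,
-- `-1` is the constant function, not `-I`.
theorem payoff_neg_one (x y : Fin k → ℝ) :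
    payoff (-1 : Matrix (Fin k) (Fin k) ℝ) x y = -(x ⬝ᵥ y) := by
  rw [payoff_eq_dotProduct_mulVec, neg_mulVec, one_mulVec, dotProduct_neg]

variable [NeZero k]

theorem payoff_neg_one_barycenter {r : Fin k → ℝ} (hr : r ∈ Δ' k) :
    payoff (-1 : Matrix (Fin k) (Fin k) ℝ) r (stdSimplex.barycenter : stdSimplex ℝ (Fin k)).val =
      -(k : ℝ)⁻¹ := by
  simp only [payoff_neg_one, dotProduct, stdSimplex.barycenter_apply, Fintype.card_fin,
    ← Finset.sum_mul, hr.2, one_mul]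

theorem payoff_neg_one_barycenter_eq_self {r : Fin k → ℝ} (hr : r ∈ Δ' k) :
    payoff (-1 : Matrix (Fin k) (Fin k) ℝ) r (stdSimplex.barycenter : stdSimplex ℝ (Fin k)).val =
      payoff (-1 : Matrix (Fin k) (Fin k) ℝ) (stdSimplex.barycenter : stdSimplex ℝ (Fin k)).val
        (stdSimplex.barycenter : stdSimplex ℝ (Fin k)).val := by
  rw [payoff_neg_one_barycenter hr, payoff_neg_one_barycenter (stdSimplex.barycenter).2]

theorem isESS_neg_one_barycenter :
    IsESS (-1 : Matrix (Fin k) (Fin k) ℝ) (stdSimplex.barycenter : stdSimplex ℝ (Fin k)).val := by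
  refine isESS_of_indifferent_of_neg (stdSimplex.barycenter).2
    (fun r hr => payoff_neg_one_barycenter_eq_self hr) fun r _ hne => ?_
  rw [payoff_neg_one, neg_lt_zero]
  exact lt_of_le_of_ne (Finset.sum_nonneg fun i _ => mul_self_nonneg _)
    (Ne.symm (dotProduct_self_eq_zero.not.mpr (sub_ne_zero.mpr hne)))

end NegIdentity

theorem stmt_0 :
    let U : Fin 2 → Fin 2 → ℝ := ![![-1, 0], ![0, -1]]
    let p : Fin 2 → ℝ := ![1/2, 1/2]
    let r1 : Fin 2 → ℝ := ![1/4, 3/4]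
    let r2 : Fin 2 → ℝ := ![3/4, 1/4]
    IsESS U p ∧
      ∀ ε : ℝ, 0 < ε → ε < 1/2 →
        payoff U p (fun j => ε * r1 j + ε * r2 j + (1 - 2*ε) * p j) =
          payoff U r1 (fun j => ε * r1 j + ε * r2 j + (1 - 2*ε) * p j) := by
  intro U p r1 r2
  have hU : U = (-1 : Matrix (Fin 2) (Fin 2) ℝ) := by
    ext i j; fin_cases i <;> fin_cases j <;> simp [U]
  have hp : p = (stdSimplex.barycenter : stdSimplex ℝ (Fin 2)).val := by
    ext i; fin_cases i <;> norm_num [p]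
  have hindiff : ∀ r ∈ Δ' 2, payoff U r p = payoff U p p := by
    rw [hU, hp]; exact fun r hr => payoff_neg_one_barycenter_eq_self hr
  have hr₁ : r1 ∈ Δ' 2 := ⟨fun i => by fin_cases i <;> norm_num [r1], by norm_num [r1]⟩
  have hsymm : r1 + r2 = (2 : ℝ) • p := by ext i; fin_cases i <;> norm_num [r1, r2, p]
  exact ⟨hU ▸ hp ▸ isESS_neg_one_barycenter, fun ε _ _ =>
    payoff_two_mutants_eq_of_indifferent hindiff hr₁ hsymm ε⟩
end
end

section
/- If a strategy p is evolutionarily stable against two mutations with a uniform invasion barrier ε̄, then for every m > 2, p is evolutionarily stable against m mutations with uniform invasion barrier ε̄/m. -/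
open Finset Set

noncomputable section

/-!
Fix one of the `m` mutants, `r i`. Pooling the other mutants into their center of mass `s`
(a point of the simplex, carrying their total share `τ`) turns the population state into one with
just the two mutants `r i` and `s`, with shares `ε i` and `τ`, both at most `e` once every share is
at most `e / m`. The two-mutant barrier then applies, unless `s = p`; in that case the state is a
single invasion by `r i`, which is also a two-mutant invasion by `r i` split into two halves.
-/

variable {k m : ℕ}

theorem mix_eq_sum_smul (p : Fin k → ℝ) (r : Fin m → Fin k → ℝ) (ε : Fin m → ℝ) :
    mix p r ε = ∑ j, ε j • r j + (1 - ∑ j, ε j) • p := by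
  funext x
  simp [mix, Finset.sum_apply]

theorem mix_pair (p a b : Fin k → ℝ) (x y : ℝ) :
    mix p ![a, b] ![x, y] = x • a + y • b + (1 - (x + y)) • p := by
  simp [mix_eq_sum_smul, Fin.sum_univ_two]

theorem mix_pair_incumbent (p a : Fin k → ℝ) (x y : ℝ) :
    mix p ![a, p] ![x, y] = mix p ![a, a] ![x / 2, x / 2] := by
  rw [mix_pair, mix_pair]
  module

theorem mix_eq_mix_pair_centerMass (p : Fin k → ℝ) (r : Fin m → Fin k → ℝ) (ε : Fin m → ℝ)
    (i : Fin m) (hτ : ∑ j ∈ univ.erase i, ε j ≠ 0) :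
    mix p r ε = mix p ![r i, (univ.erase i).centerMass ε r] ![ε i, ∑ j ∈ univ.erase i, ε j] := by
  rw [mix_pair, Finset.centerMass, smul_inv_smul₀ hτ, mix_eq_sum_smul,
    ← Finset.add_sum_erase _ _ (mem_univ i), ← Finset.add_sum_erase _ _ (mem_univ i)]

section

variable {U : Fin k → Fin k → ℝ} {p : Fin k → ℝ} {e : ℝ}

theorem UniformBarrier.pair (h2 : UniformBarrier U 2 p e) {a b : Fin k → ℝ}
    (ha : a ∈ Δ' k) (hb : b ∈ Δ' k) (hap : a ≠ p) (hbp : b ≠ p) {x y : ℝ}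
    (hx : x ∈ Set.Ioc 0 e) (hy : y ∈ Set.Ioc 0 e) :
    payoff U p (mix p ![a, b] ![x, y]) > payoff U a (mix p ![a, b] ![x, y]) :=
  h2 ![a, b] (Fin.forall_fin_two.2 ⟨ha, hb⟩) (Fin.forall_fin_two.2 ⟨hap, hbp⟩) ![x, y]
    (Fin.forall_fin_two.2 ⟨hx, hy⟩) 0

theorem UniformBarrier.pair_incumbent (h2 : UniformBarrier U 2 p e) {a : Fin k → ℝ}
    (ha : a ∈ Δ' k) (hap : a ≠ p) {x : ℝ} (hx : x ∈ Set.Ioc 0 e) (y : ℝ) :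
    payoff U p (mix p ![a, p] ![x, y]) > payoff U a (mix p ![a, p] ![x, y]) := by
  have hx2 : x / 2 ∈ Set.Ioc 0 e := ⟨by linarith [hx.1], by linarith [hx.1, hx.2]⟩
  rw [mix_pair_incumbent]
  exact h2.pair ha ha hap hap hx2 hx2

theorem UniformBarrier.of_two (hm : 2 ≤ m) (h2 : UniformBarrier U 2 p e) :
    UniformBarrier U m p (e / m) := by
  intro r hr hrp ε hε i
  have : Nontrivial (Fin m) := Fin.nontrivial_iff_two_le.2 hm
  obtain ⟨j, hji⟩ := exists_ne i
  have hτ_pos : 0 < ∑ j ∈ univ.erase i, ε j :=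
    Finset.sum_pos (fun j _ => (hε j).1) ⟨j, mem_erase.2 ⟨hji, mem_univ j⟩⟩
  have hσ_le : ε i + ∑ j ∈ univ.erase i, ε j ≤ e := by
    calc ε i + ∑ j ∈ univ.erase i, ε j = ∑ j, ε j := Finset.add_sum_erase _ _ (mem_univ i)
      _ ≤ ∑ _j : Fin m, e / m := Finset.sum_le_sum fun j _ => (hε j).2
      _ = e := by
        simp only [sum_const, card_univ, Fintype.card_fin, nsmul_eq_mul]
        field_simp
  have hεi : ε i ∈ Set.Ioc 0 e := ⟨(hε i).1, by linarith⟩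
  have hs : (univ.erase i).centerMass ε r ∈ Δ' k :=
    (convex_stdSimplex ℝ (Fin k)).centerMass_mem (fun j _ => (hε j).1.le) hτ_pos
      (fun j _ => hr j)
  rw [mix_eq_mix_pair_centerMass p r ε i hτ_pos.ne']
  by_cases hsp : (univ.erase i).centerMass ε r = p
  · rw [hsp]
    exact h2.pair_incumbent (hr i) (hrp i) hεi _
  · exact h2.pair (hr i) hs (hrp i) hsp hεi ⟨hτ_pos, by linarith [(hε i).1]⟩
end

theorem stmt_1_general {k : ℕ} (U : Fin k → Fin k → ℝ) (p : Fin k → ℝ)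
    (e : ℝ) (h2 : UniformBarrier U 2 p e) :
    ∀ m : ℕ, 2 < m → UniformBarrier U m p (e / m) :=
  fun _ hm => h2.of_two hm.le

theorem stmt_1 {k : ℕ} (U : Fin k → Fin k → ℝ) (p : Fin k → ℝ) (hp : p ∈ Δ' k)
    (e : ℝ) (he : e ∈ Set.Ioo (0:ℝ) 1) (h2 : UniformBarrier U 2 p e) :
    ∀ m : ℕ, 2 < m → UniformBarrier U m p (e / m) :=
  stmt_1_general U p e h2
end
end

section
/- If p is evolutionarily stable against two mutations, then p is a symmetric Nash equilibrium, and for every q ∈ BR(p)\{p} and every r ∈ Δ one has u(p,q) > u(q,q) and u(p,r) ≥ u(q,r). -/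
open Finset Set

noncomputable section

/-! Write `D x = payoff U p x - payoff U q x` for the incumbent's advantage over a mutant `q`.
Stability against the pair `(q, r)`, seen from `q`, says
`ε₁ D q + ε₂ D r + (1 - ε₁ - ε₂) D p > 0` for all small shares `ε₁, ε₂`, since the payoff is
linear in the population state. Letting `ε₁ = ε₂ → 0` with `r = q` gives `D p ≥ 0`, i.e. `p` is a
best response to itself. If `q` is a best response too then `D p = 0`, so taking `r = q` gives
`D q > 0`, and fixing `ε₂` while `ε₁ → 0` gives `D r ≥ 0`. -/

open Filter Topology

lemma nonneg_of_forall_Ioc_pos_add_mul {a b e : ℝ} (he : 0 < e)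
    (h : ∀ ε ∈ Set.Ioc 0 e, 0 < a + ε * b) : 0 ≤ a := by
  have hlim : Tendsto (fun ε : ℝ => a + ε * b) (𝓝[>] 0) (𝓝 a) := by
    have hcont : Continuous fun ε : ℝ => a + ε * b := by fun_prop
    simpa using (hcont.tendsto 0).mono_left nhdsWithin_le_nhds
  refine ge_of_tendsto hlim ?_
  filter_upwards [Ioc_mem_nhdsGT he] with ε hε using (h ε hε).le

lemma payoff_mix_two {k : ℕ} (U : Fin k → Fin k → ℝ) (a p q r : Fin k → ℝ) (ε₁ ε₂ : ℝ) :
    payoff U a (mix p ![q, r] ![ε₁, ε₂]) =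
      ε₁ * payoff U a q + ε₂ * payoff U a r + (1 - (ε₁ + ε₂)) * payoff U a p := by
  simp only [payoff, mix, Fin.sum_univ_two, Matrix.cons_val_zero, Matrix.cons_val_one,
    Finset.mul_sum, ← Finset.sum_add_distrib]
  refine Finset.sum_congr rfl fun i _ => Finset.sum_congr rfl fun j _ => ?_
  ring

namespace StableAgainst

variable {k : ℕ} {U : Fin k → Fin k → ℝ} {p : Fin k → ℝ}

lemma exists_advantage_pos (h : StableAgainst U 2 p) {q r : Fin k → ℝ}
    (hq : q ∈ Δ' k) (hr : r ∈ Δ' k) (hqp : q ≠ p) (hrp : r ≠ p) :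
    ∃ e : ℝ, 0 < e ∧ ∀ ε₁ ∈ Set.Ioc 0 e, ∀ ε₂ ∈ Set.Ioc 0 e,
      0 < ε₁ * (payoff U p q - payoff U q q) + ε₂ * (payoff U p r - payoff U q r) +
        (1 - (ε₁ + ε₂)) * (payoff U p p - payoff U q p) := by
  obtain ⟨e, ⟨he, -⟩, hstable⟩ := h ![q, r] (Fin.forall_fin_two.2 ⟨hq, hr⟩)
    (Fin.forall_fin_two.2 ⟨hqp, hrp⟩)
  refine ⟨e, he, fun ε₁ hε₁ ε₂ hε₂ => ?_⟩
  have := hstable ![ε₁, ε₂] (Fin.forall_fin_two.2 ⟨hε₁, hε₂⟩) 0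
  rw [payoff_mix_two, payoff_mix_two] at this
  simp only [Matrix.cons_val_zero] at this
  linarith

lemma self_mem_BR (hp : p ∈ Δ' k) (h : StableAgainst U 2 p) : p ∈ BR U p := by
  refine ⟨hp, fun r hr => ?_⟩
  rcases eq_or_ne r p with rfl | hrp
  · exact le_rfl
  obtain ⟨e, he, hadv⟩ := h.exists_advantage_pos hr hr hrp hrp
  have : 0 ≤ payoff U p p - payoff U r p := by
    refine nonneg_of_forall_Ioc_pos_add_mul (b := 2 * (payoff U p r - payoff U r r) -
      2 * (payoff U p p - payoff U r p)) he fun ε hε => ?_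
    linarith [hadv ε hε ε hε]
  linarith

variable (hp : p ∈ Δ' k) (h : StableAgainst U 2 p) {q : Fin k → ℝ} (hq : q ∈ BR U p)
include hp h hq

lemma payoff_eq_of_mem_BR : payoff U q p = payoff U p p :=
  le_antisymm ((h.self_mem_BR hp).2 q hq.1) (hq.2 p hp)

lemma payoff_lt_of_mem_BR (hqp : q ≠ p) : payoff U q q < payoff U p q := by
  obtain ⟨e, he, hadv⟩ := h.exists_advantage_pos hq.1 hq.1 hqp hqp
  have := hadv e ⟨he, le_rfl⟩ e ⟨he, le_rfl⟩
  rw [payoff_eq_of_mem_BR hp h hq, sub_self, mul_zero, add_zero, ← add_mul] at this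
  exact sub_pos.1 (pos_of_mul_pos_right this (by positivity))

lemma payoff_le_of_mem_BR (hqp : q ≠ p) {r : Fin k → ℝ} (hr : r ∈ Δ' k) :
    payoff U q r ≤ payoff U p r := by
  rcases eq_or_ne r p with rfl | hrp
  · exact (payoff_eq_of_mem_BR hr h hq).le
  obtain ⟨e, he, hadv⟩ := h.exists_advantage_pos hq.1 hr hqp hrp
  have : 0 ≤ e * (payoff U p r - payoff U q r) := by
    refine nonneg_of_forall_Ioc_pos_add_mul (b := payoff U p q - payoff U q q) he
      fun ε hε => ?_
    have := hadv ε hε e ⟨he, le_rfl⟩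
    rw [payoff_eq_of_mem_BR hp h hq, sub_self, mul_zero, add_zero] at this
    linarith
  exact sub_nonneg.1 (nonneg_of_mul_nonneg_right this he)

end StableAgainst

theorem stmt_2 {k : ℕ} (U : Fin k → Fin k → ℝ) (p : Fin k → ℝ) (hp : p ∈ Δ' k)
    (h : StableAgainst U 2 p) :
    p ∈ BR U p ∧
      ∀ q ∈ BR U p, q ≠ p → ∀ r ∈ Δ' k,
        payoff U p q > payoff U q q ∧ payoff U p r ≥ payoff U q r :=
  ⟨h.self_mem_BR hp, fun _ hq hqp _ hr =>
    ⟨h.payoff_lt_of_mem_BR hp hq hqp, h.payoff_le_of_mem_BR hp hq hqp hr⟩⟩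
end
end

section
/- If p ∈ Δ is a symmetric Nash equilibrium and for every q ∈ BR(p)\{p} and every r ∈ Δ one has u(p,q) > u(q,q) and u(p,r) ≥ u(q,r), then p is evolutionarily stable against two mutations. -/
/-!
Against mutants `r j` in shares `ε j`, the payoff advantage of `p` over `r i` is affine in `ε`:
`∑ j, ε j * (u(p, r j) - u(r i, r j)) + (1 - ∑ j, ε j) * (u(p, p) - u(r i, p))`.
If `r i` is not a best response to `p`, the constant term is positive and wins for small `ε`.
If it is, every coefficient is nonnegative by hypothesis and that of `ε i` is positive.
The argument works for any number of mutations.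
-/

open Finset Set

noncomputable section

open Filter Topology

theorem eventually_abs_sum_mul_lt {ι : Type*} [Fintype ι] (b : ι → ℝ) {c : ℝ} (hc : 0 < c) :
    ∀ᶠ e in 𝓝[>] (0 : ℝ), ∀ ε : ι → ℝ, (∀ j, ε j ∈ Set.Ioc 0 e) → |∑ j, ε j * b j| < c := by
  have hlim : Tendsto (fun e : ℝ => e * ∑ j, |b j|) (𝓝[>] 0) (𝓝 0) := by
    have hid : Tendsto id (𝓝[>] (0 : ℝ)) (𝓝 0) := nhdsWithin_le_nhds
    simpa using hid.mul_const (∑ j, |b j|)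
  filter_upwards [hlim.eventually (gt_mem_nhds hc)] with e he ε hε
  calc |∑ j, ε j * b j| ≤ ∑ j, |ε j * b j| := abs_sum_le_sum_abs _ _
    _ = ∑ j, ε j * |b j| := by simp only [abs_mul, abs_of_pos (hε _).1]
    _ ≤ ∑ j, e * |b j| := sum_le_sum fun j _ => mul_le_mul_of_nonneg_right (hε j).2 (abs_nonneg _)
    _ = e * ∑ j, |b j| := (mul_sum _ _ _).symm
    _ < c := he

theorem eventually_sum_mul_add_pos_of_pos {ι : Type*} [Fintype ι] (a : ι → ℝ) {c : ℝ}
    (hc : 0 < c) :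
    ∀ᶠ e in 𝓝[>] (0 : ℝ), ∀ ε : ι → ℝ, (∀ j, ε j ∈ Set.Ioc 0 e) →
      0 < ∑ j, ε j * a j + (1 - ∑ j, ε j) * c := by
  filter_upwards [eventually_abs_sum_mul_lt (fun j => a j - c) hc] with e he ε hε
  have hsmall := (abs_lt.1 (he ε hε)).1
  have hrw : ∑ j, ε j * a j + (1 - ∑ j, ε j) * c = c + ∑ j, ε j * (a j - c) := by
    simp only [mul_sub, sum_sub_distrib, ← sum_mul]
    ring
  linarith

theorem eventually_sum_mul_add_pos_of_nonneg {ι : Type*} [Fintype ι] {a : ι → ℝ} {c : ℝ}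
    (ha : ∀ j, 0 ≤ a j) {i : ι} (hi : 0 < a i) (hc : 0 ≤ c) :
    ∀ᶠ e in 𝓝[>] (0 : ℝ), ∀ ε : ι → ℝ, (∀ j, ε j ∈ Set.Ioc 0 e) →
      0 < ∑ j, ε j * a j + (1 - ∑ j, ε j) * c := by
  filter_upwards [eventually_abs_sum_mul_lt (fun _ : ι => (1 : ℝ)) one_pos] with e he ε hε
  have hsum : ∑ j, ε j < 1 := by simpa using (abs_lt.1 (he ε hε)).2
  have hpos : 0 < ∑ j, ε j * a j :=
    sum_pos' (fun j _ => mul_nonneg (hε j).1.le (ha j)) ⟨i, mem_univ _, mul_pos (hε i).1 hi⟩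
  exact add_pos_of_pos_of_nonneg hpos (mul_nonneg (by linarith) hc)

theorem payoff_mix {k m : ℕ} (U : Fin k → Fin k → ℝ) (a p : Fin k → ℝ)
    (r : Fin m → Fin k → ℝ) (ε : Fin m → ℝ) :
    payoff U a (mix p r ε) = ∑ j, ε j * payoff U a (r j) + (1 - ∑ j, ε j) * payoff U a p := by
  simp only [payoff, mix, mul_add, add_mul, sum_add_distrib, mul_sum, sum_mul]
  rw [sum_comm (γ := Fin m)]
  congr 1
  · refine sum_congr rfl fun i _ => ?_
    rw [sum_comm]
    refine sum_congr rfl fun l _ => sum_congr rfl fun j _ => by ring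
  · refine sum_congr rfl fun i _ => sum_congr rfl fun j _ => by ring

theorem payoff_sub_payoff_mix {k m : ℕ} (U : Fin k → Fin k → ℝ) (a b p : Fin k → ℝ)
    (r : Fin m → Fin k → ℝ) (ε : Fin m → ℝ) :
    payoff U a (mix p r ε) - payoff U b (mix p r ε) =
      ∑ j, ε j * (payoff U a (r j) - payoff U b (r j))
        + (1 - ∑ j, ε j) * (payoff U a p - payoff U b p) := by
  simp only [payoff_mix, mul_sub, sum_sub_distrib]
  ring

section Dominance

variable {k : ℕ} {U : Fin k → Fin k → ℝ} {p : Fin k → ℝ}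

theorem eventually_payoff_lt_payoff_mix (hNE : p ∈ BR U p)
    (h : ∀ q ∈ BR U p, q ≠ p → ∀ r ∈ Δ' k,
        payoff U p q > payoff U q q ∧ payoff U p r ≥ payoff U q r)
    {m : ℕ} {r : Fin m → Fin k → ℝ} (hr : ∀ j, r j ∈ Δ' k) {i : Fin m} (hri : r i ≠ p) :
    ∀ᶠ e in 𝓝[>] (0 : ℝ), ∀ ε : Fin m → ℝ, (∀ j, ε j ∈ Set.Ioc 0 e) →
      payoff U (r i) (mix p r ε) < payoff U p (mix p r ε) := by
  suffices ∀ᶠ e in 𝓝[>] (0 : ℝ), ∀ ε : Fin m → ℝ, (∀ j, ε j ∈ Set.Ioc 0 e) →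
      0 < ∑ j, ε j * (payoff U p (r j) - payoff U (r i) (r j))
        + (1 - ∑ j, ε j) * (payoff U p p - payoff U (r i) p) by
    filter_upwards [this] with e he ε hε
    rw [← sub_pos, payoff_sub_payoff_mix]
    exact he ε hε
  by_cases hBR : r i ∈ BR U p
  · exact eventually_sum_mul_add_pos_of_nonneg
      (fun j => sub_nonneg.2 (h _ hBR hri _ (hr j)).2) (sub_pos.2 (h _ hBR hri _ (hr i)).1)
      (sub_nonneg.2 (hNE.2 _ (hr i)))
  · obtain ⟨s, hs, hlt⟩ : ∃ s ∈ Δ' k, payoff U (r i) p < payoff U s p := by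
      simpa [BR, hr i] using hBR
    exact eventually_sum_mul_add_pos_of_pos _ (sub_pos.2 (hlt.trans_le (hNE.2 s hs)))

theorem stableAgainst_of_dominates_bestResponses (hNE : p ∈ BR U p)
    (h : ∀ q ∈ BR U p, q ≠ p → ∀ r ∈ Δ' k,
        payoff U p q > payoff U q q ∧ payoff U p r ≥ payoff U q r) (m : ℕ) :
    StableAgainst U m p := by
  intro r hr hrp
  have hall := eventually_all.2 fun i => eventually_payoff_lt_payoff_mix hNE h hr (hrp i)
  obtain ⟨e, he, he01⟩ := (hall.and (Ioo_mem_nhdsGT one_pos)).exists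
  exact ⟨e, he01, fun ε hε i => he i ε hε⟩

end Dominance

theorem stmt_3_general {k : ℕ} (U : Fin k → Fin k → ℝ) (p : Fin k → ℝ)
    (hNE : p ∈ BR U p)
    (h : ∀ q ∈ BR U p, q ≠ p → ∀ r ∈ Δ' k,
        payoff U p q > payoff U q q ∧ payoff U p r ≥ payoff U q r) :
    StableAgainst U 2 p :=
  stableAgainst_of_dominates_bestResponses hNE h 2

theorem stmt_3 {k : ℕ} (U : Fin k → Fin k → ℝ) (p : Fin k → ℝ) (hp : p ∈ Δ' k)
    (hNE : p ∈ BR U p)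
    (h : ∀ q ∈ BR U p, q ≠ p → ∀ r ∈ Δ' k,
        payoff U p q > payoff U q q ∧ payoff U p r ≥ payoff U q r) :
    StableAgainst U 2 p :=
  stmt_3_general U p hNE h
end
end

section
/- A strategy p is evolutionarily stable against multiple mutations (i.e., against m mutations for every m ≥ 2) if and only if p is locally dominant. -/
/-!
Along a segment `p + τ • (q - p)` every payoff difference is affine in `τ`, because the payoff is
bilinear. With `α i = u(rⁱ, p) - u(p, p)` and `C i j = u(rⁱ, rʲ) - u(rⁱ, p) - u(p, rʲ) + u(p, p)`,
stability against the mutants `rⁱ` says that `α i + ∑ j, ε j * C i j < 0` for all small positive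
weights `ε`. Local dominance, tested on segments, gives `α i ≤ 0`, and, when `α i = 0`,
`C i j ≤ 0` for all `j` and `C i i < 0`; this is exactly what that sign needs.

Conversely, every state `x` near `p` is a mix of `p` with small nonnegative weights on the pure
strategies, so stability against this finite family (extended to zero weights by continuity) makes
`p` a best response to `x`. For strictness, write `x` as the midpoint of `p` and `y = 2x - p`:
`p` is a best response to `y`, and stability against two copies of `y` makes the affine payoff
advantage of `y` negative just next to `p`, hence also at the midpoint.
-/

open Finset Set

noncomputable section

open Filter Topology

theorem nonpos_of_eventually_add_mul_nonpos {a c : ℝ}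
    (h : ∀ᶠ τ in 𝓝[>] (0 : ℝ), a + τ * c ≤ 0) : a ≤ 0 := by
  have hcont : Continuous fun τ : ℝ => a + τ * c := by fun_prop
  exact le_of_tendsto (by simpa using (hcont.tendsto 0).mono_left nhdsWithin_le_nhds) h

theorem nonpos_of_eventually_mul_nonpos {c : ℝ} (h : ∀ᶠ τ in 𝓝[>] (0 : ℝ), τ * c ≤ 0) :
    c ≤ 0 := by
  obtain ⟨τ, hτc, hτ⟩ := (h.and self_mem_nhdsWithin).exists
  exact nonpos_of_mul_nonpos_right hτc hτ

theorem neg_of_eventually_mul_neg {c : ℝ} (h : ∀ᶠ τ in 𝓝[>] (0 : ℝ), τ * c < 0) : c < 0 := by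
  obtain ⟨τ, hτc, hτ⟩ := (h.and self_mem_nhdsWithin).exists
  exact neg_of_mul_neg_right hτc (le_of_lt hτ)

theorem eventually_add_sum_mul_neg {ι : Type*} [Fintype ι] {a : ℝ} {c : ι → ℝ} {i : ι}
    (ha : a ≤ 0) (hc : a = 0 → ∀ j, c j ≤ 0) (hci : a = 0 → c i < 0) :
    ∀ᶠ ε in 𝓝 (0 : ι → ℝ), (∀ j, 0 < ε j) → a + ∑ j, ε j * c j < 0 := by
  rcases ha.lt_or_eq with ha | rfl
  · have hcont : Continuous fun ε : ι → ℝ => a + ∑ j, ε j * c j := by fun_prop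
    filter_upwards [hcont.tendsto 0 |>.eventually (eventually_lt_nhds (by simpa using ha))]
      with ε hε _ using hε
  · refine Eventually.of_forall fun ε hε => ?_
    calc 0 + ∑ j, ε j * c j ≤ ∑ j ∈ {i}, ε j * c j := by
          rw [zero_add]
          exact Finset.sum_le_sum_of_subset_of_nonpos' (Finset.subset_univ _)
            fun j _ _ => mul_nonpos_of_nonneg_of_nonpos (hε j).le (hc rfl j)
      _ < 0 := by
          rw [Finset.sum_singleton]
          exact mul_neg_of_pos_of_neg (hε i) (hci rfl)

theorem exists_barrier_of_eventually {ι : Type*} [Fintype ι] {P : (ι → ℝ) → Prop}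
    (h : ∀ᶠ ε in 𝓝 (0 : ι → ℝ), (∀ j, 0 < ε j) → P ε) :
    ∃ e ∈ Set.Ioo (0 : ℝ) 1, ∀ ε : ι → ℝ, (∀ j, ε j ∈ Set.Ioc 0 e) → P ε := by
  obtain ⟨δ, hδ, hball⟩ := Metric.eventually_nhds_iff.1 h
  refine ⟨min (δ / 2) (1 / 2), ⟨by positivity, by linarith [min_le_right (δ / 2) (1 / 2)]⟩,
    fun ε hε => hball ((dist_pi_lt_iff hδ).2 fun j => ?_) fun j => (hε j).1⟩
  rw [Pi.zero_apply, Real.dist_0_eq_abs, abs_of_pos (hε j).1]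
  linarith [(hε j).2, min_le_left (δ / 2) (1 / 2)]

theorem add_half_mul_neg {a b t : ℝ} (h1 : a + b ≤ 0) (ht : 0 < t) (ht' : t ≤ 1 / 2)
    (hat : a + t * b < 0) : a + 1 / 2 * b < 0 := by
  rcases lt_or_ge 0 b with hb | hb <;> nlinarith

section Strategies

variable {k : ℕ}

section Payoff

variable (U : Fin k → Fin k → ℝ)

theorem payoff_eq_toLinearMap₂' (x y : Fin k → ℝ) :
    payoff U x y = Matrix.toLinearMap₂' ℝ (Matrix.of U) x y := by
  simp only [payoff, Matrix.toLinearMap₂'_apply, Matrix.of_apply, smul_eq_mul, mul_assoc]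

theorem payoff_segment_left (p q x : Fin k → ℝ) (τ : ℝ) :
    payoff U (p + τ • (q - p)) x = payoff U p x + τ * (payoff U q x - payoff U p x) := by
  simp only [payoff_eq_toLinearMap₂', map_add, map_smul, map_sub, LinearMap.add_apply,
    LinearMap.smul_apply, LinearMap.sub_apply, smul_eq_mul]

theorem payoff_segment_right (x p q : Fin k → ℝ) (τ : ℝ) :
    payoff U x (p + τ • (q - p)) = payoff U x p + τ * (payoff U x q - payoff U x p) := by
  simp only [payoff_eq_toLinearMap₂', map_add, map_smul, map_sub, smul_eq_mul]

theorem mix_eq {m : ℕ} (p : Fin k → ℝ) (r : Fin m → Fin k → ℝ) (ε : Fin m → ℝ) :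
    mix p r ε = p + ∑ i, ε i • (r i - p) := by
  funext j
  simp only [mix, Pi.add_apply, Finset.sum_apply, Pi.smul_apply, Pi.sub_apply, smul_eq_mul,
    mul_sub, Finset.sum_sub_distrib]
  rw [← Finset.sum_mul]
  ring

theorem payoff_mix_right {m : ℕ} (x p : Fin k → ℝ) (r : Fin m → Fin k → ℝ) (ε : Fin m → ℝ) :
    payoff U x (mix p r ε) = payoff U x p + ∑ i, ε i * (payoff U x (r i) - payoff U x p) := by
  simp only [mix_eq, payoff_eq_toLinearMap₂', map_add, map_sum, map_smul, map_sub, smul_eq_mul]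

theorem payoff_eq_sum_pure' (s x : Fin k → ℝ) :
    payoff U s x = ∑ i, s i * payoff U (pure' i) x := by
  simp [payoff, pure', Finset.mul_sum, mul_assoc]

theorem payoff_le_of_forall_pure'_le {s x : Fin k → ℝ} {c : ℝ} (hs : s ∈ Δ' k)
    (h : ∀ i, payoff U (pure' i) x ≤ c) : payoff U s x ≤ c :=
  calc payoff U s x = ∑ i, s i * payoff U (pure' i) x := payoff_eq_sum_pure' U s x
    _ ≤ ∑ i, s i * c := Finset.sum_le_sum fun i _ => mul_le_mul_of_nonneg_left (h i) (hs.1 i)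
    _ = c := by rw [← Finset.sum_mul, hs.2, one_mul]

end Payoff

theorem mix_const {m : ℕ} (p q : Fin k → ℝ) (η : ℝ) :
    mix p (fun _ : Fin m => q) (fun _ => η) = p + (m * η) • (q - p) := by
  rw [mix_eq, Finset.sum_const, Finset.card_univ, Fintype.card_fin, ← Nat.cast_smul_eq_nsmul ℝ,
    smul_smul]

theorem sum_smul_pure'_sub (t p : Fin k → ℝ) :
    ∑ j, t j • (pure' j - p) = t - (∑ j, t j) • p := by
  funext i
  simp [pure', Finset.sum_apply, mul_sub, Finset.sum_sub_distrib, Finset.sum_mul]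

theorem pure'_mem (i : Fin k) : pure' i ∈ Δ' k := by
  constructor
  · intro j; simp only [pure']; split <;> norm_num
  · simp [pure']

theorem add_smul_sub_ne {p q : Fin k → ℝ} (hqp : q ≠ p) {τ : ℝ} (hτ : τ ≠ 0) :
    p + τ • (q - p) ≠ p := by
  simpa [sub_eq_zero, hτ] using hqp

theorem tendsto_add_smul_sub_nhdsWithin {p q : Fin k → ℝ} (hp : p ∈ Δ' k) (hq : q ∈ Δ' k) :
    Tendsto (fun τ : ℝ => p + τ • (q - p)) (𝓝[>] 0) (𝓝[Δ' k] p) := by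
  refine tendsto_nhdsWithin_iff.2 ⟨?_, ?_⟩
  · have hcont : Continuous fun τ : ℝ => p + τ • (q - p) := by fun_prop
    simpa using (hcont.tendsto 0).mono_left nhdsWithin_le_nhds
  · filter_upwards [Ioc_mem_nhdsGT one_pos] with τ hτ
    exact (convex_stdSimplex ℝ (Fin k)).add_smul_sub_mem hp hq ⟨hτ.1.le, hτ.2⟩

namespace LocallyDominant

variable {U : Fin k → Fin k → ℝ} {p : Fin k → ℝ}

theorem eventually_payoff_le_segment (h : LocallyDominant U p) (hp : p ∈ Δ' k)
    {q q' : Fin k → ℝ} (hq : q ∈ Δ' k) (hqp : q ≠ p) (hq' : q' ∈ Δ' k) (hq'p : q' ≠ p) :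
    ∀ᶠ τ in 𝓝[>] (0 : ℝ), payoff U q (p + τ • (q' - p)) ≤ payoff U p (p + τ • (q' - p)) := by
  obtain ⟨V, hV, -, hdom⟩ := h
  obtain ⟨σ, hσV, hσ : 0 < σ⟩ :=
    (((tendsto_add_smul_sub_nhdsWithin hp hq).eventually hV).and self_mem_nhdsWithin).exists
  filter_upwards [(tendsto_add_smul_sub_nhdsWithin hp hq').eventually hV, self_mem_nhdsWithin]
    with τ hτV (hτ : 0 < τ)
  have hle := (hdom _ hσV (add_smul_sub_ne hqp (ne_of_gt hσ)) _ hτV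
    (add_smul_sub_ne hq'p (ne_of_gt hτ))).1
  rw [ge_iff_le, payoff_segment_left] at hle
  nlinarith

theorem eventually_payoff_lt_segment (h : LocallyDominant U p) (hp : p ∈ Δ' k)
    {q : Fin k → ℝ} (hq : q ∈ Δ' k) (hqp : q ≠ p) :
    ∀ᶠ τ in 𝓝[>] (0 : ℝ), payoff U q (p + τ • (q - p)) < payoff U p (p + τ • (q - p)) := by
  obtain ⟨V, hV, -, hdom⟩ := h
  filter_upwards [(tendsto_add_smul_sub_nhdsWithin hp hq).eventually hV, self_mem_nhdsWithin]
    with τ hτV (hτ : 0 < τ)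
  have hlt := (hdom _ hτV (add_smul_sub_ne hqp (ne_of_gt hτ)) _ hτV
    (add_smul_sub_ne hqp (ne_of_gt hτ))).2
  rw [gt_iff_lt, payoff_segment_left] at hlt
  nlinarith

theorem stableAgainst (h : LocallyDominant U p) (hp : p ∈ Δ' k) (m : ℕ) :
    StableAgainst U m p := by
  intro r hr hrp
  set α : Fin m → ℝ := fun i => payoff U (r i) p - payoff U p p
  set C : Fin m → Fin m → ℝ := fun i j =>
    payoff U (r i) (r j) - payoff U (r i) p - (payoff U p (r j) - payoff U p p)
  have hmix : ∀ ε i, payoff U (r i) (mix p r ε) - payoff U p (mix p r ε) =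
      α i + ∑ j, ε j * C i j := by
    intro ε i
    simp only [payoff_mix_right, α, C, mul_sub, Finset.sum_sub_distrib]
    ring
  have hsegment : ∀ i j (τ : ℝ),
      payoff U (r i) (p + τ • (r j - p)) - payoff U p (p + τ • (r j - p)) = α i + τ * C i j := by
    intro i j τ
    simp only [payoff_segment_right, α, C]
    ring
  have hle : ∀ i j, ∀ᶠ τ in 𝓝[>] (0 : ℝ), α i + τ * C i j ≤ 0 := fun i j =>
    (h.eventually_payoff_le_segment hp (hr i) (hrp i) (hr j) (hrp j)).mono fun τ hτ => by
      linarith [hsegment i j τ]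
  have hlt : ∀ i, ∀ᶠ τ in 𝓝[>] (0 : ℝ), α i + τ * C i i < 0 := fun i =>
    (h.eventually_payoff_lt_segment hp (hr i) (hrp i)).mono fun τ hτ => by
      linarith [hsegment i i τ]
  have hα : ∀ i, α i ≤ 0 := fun i => nonpos_of_eventually_add_mul_nonpos (hle i i)
  have hC : ∀ i, α i = 0 → ∀ j, C i j ≤ 0 := fun i hi j =>
    nonpos_of_eventually_mul_nonpos (by simpa [hi] using hle i j)
  have hCii : ∀ i, α i = 0 → C i i < 0 := fun i hi =>
    neg_of_eventually_mul_neg (by simpa [hi] using hlt i)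
  refine exists_barrier_of_eventually ?_
  filter_upwards [eventually_all.2 fun i => eventually_add_sum_mul_neg (hα i) (hC i) (hCii i)]
    with ε hε hpos i
  linarith [hε i hpos, hmix ε i]

end LocallyDominant

theorem StableAgainst.exists_payoff_le {U : Fin k → Fin k → ℝ} {m : ℕ} {p : Fin k → ℝ}
    (h : StableAgainst U m p) {r : Fin m → Fin k → ℝ} (hr : ∀ i, r i ∈ Δ' k)
    (hrp : ∀ i, r i ≠ p) :
    ∃ e > 0, ∀ ε : Fin m → ℝ, (∀ j, ε j ∈ Set.Icc 0 e) →
      ∀ i, payoff U (r i) (mix p r ε) ≤ payoff U p (mix p r ε) := by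
  obtain ⟨e, he, hlt⟩ := h r hr hrp
  refine ⟨e, he.1, fun ε hε i => ?_⟩
  -- push `ε` into the box `(0, e]` along the segment towards the corner `(e, …, e)`
  let εθ : ℝ → Fin m → ℝ := fun θ j => ε j + θ * (e - ε j)
  have hcont : Continuous fun θ =>
      payoff U p (mix p r (εθ θ)) - payoff U (r i) (mix p r (εθ θ)) := by
    simp only [payoff_mix_right, εθ]
    fun_prop
  have hpos : ∀ᶠ θ in 𝓝[>] (0 : ℝ),
      0 ≤ payoff U p (mix p r (εθ θ)) - payoff U (r i) (mix p r (εθ θ)) := by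
    filter_upwards [Ioc_mem_nhdsGT one_pos] with θ hθ
    refine (sub_pos.2 (hlt _ (fun j => ⟨?_, ?_⟩) i)).le <;>
      nlinarith [(hε j).1, (hε j).2, hθ.1, hθ.2, he.1]
  have h0 : εθ 0 = ε := by simp [εθ]
  simpa [h0] using ge_of_tendsto ((hcont.tendsto 0).mono_left nhdsWithin_le_nhds) hpos

theorem eventually_mul_apply_le {p : Fin k → ℝ} (hp : p ∈ Δ' k) {c : ℝ} (hc : c < 1) :
    ∀ᶠ x in 𝓝[Δ' k] p, ∀ j, c * p j ≤ x j := by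
  refine eventually_all.2 fun j => ?_
  rcases (hp.1 j).eq_or_lt with h0 | hpos
  · filter_upwards [self_mem_nhdsWithin] with x hx
    rw [← h0, mul_zero]
    exact hx.1 j
  · have hlt : c * p j < p j := by nlinarith
    exact nhdsWithin_le_nhds <|
      ((continuous_apply j).tendsto p).eventually (eventually_gt_nhds hlt) |>.mono fun _ h => h.le

theorem eventually_apply_lt (p : Fin k → ℝ) {d : ℝ} (hd : 0 < d) :
    ∀ᶠ x in 𝓝 p, ∀ j, x j < p j + d :=
  eventually_all.2 fun j =>
    ((continuous_apply j).tendsto p).eventually (eventually_lt_nhds (lt_add_of_pos_right _ hd))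

/-- The two extra copies of `q₀` give at least two mutants whatever `k` is. -/
def pureMutants (p q₀ : Fin k → ℝ) : Fin (k + 2) → Fin k → ℝ :=
  Fin.append (fun j => if pure' j = p then q₀ else pure' j) fun _ => q₀

theorem pureMutants_mem {p q₀ : Fin k → ℝ} (hq₀ : q₀ ∈ Δ' k) (i : Fin (k + 2)) :
    pureMutants p q₀ i ∈ Δ' k := by
  refine Fin.addCases (fun j => ?_) (fun j => ?_) i
  · simp only [pureMutants, Fin.append_left]
    split_ifs
    exacts [hq₀, pure'_mem j]
  · simpa [pureMutants, Fin.append_right] using hq₀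

theorem pureMutants_ne {p q₀ : Fin k → ℝ} (hq₀p : q₀ ≠ p) (i : Fin (k + 2)) :
    pureMutants p q₀ i ≠ p := by
  refine Fin.addCases (fun j => ?_) (fun j => ?_) i
  · simp only [pureMutants, Fin.append_left]
    split_ifs with hj
    exacts [hq₀p, hj]
  · simpa [pureMutants, Fin.append_right] using hq₀p

theorem pureMutants_castAdd {p q₀ : Fin k → ℝ} {j : Fin k} (hj : pure' j ≠ p) :
    pureMutants p q₀ (Fin.castAdd 2 j) = pure' j := by
  simp [pureMutants, hj]

theorem eventually_exists_mix_pureMutants_eq {p : Fin k → ℝ} (hp : p ∈ Δ' k) (q₀ : Fin k → ℝ)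
    {e : ℝ} (he : 0 < e) :
    ∀ᶠ x in 𝓝[Δ' k] p, ∃ ε, (∀ i, ε i ∈ Set.Icc 0 e) ∧ mix p (pureMutants p q₀) ε = x := by
  filter_upwards [self_mem_nhdsWithin, eventually_mul_apply_le hp (c := 1 - e / 2) (by linarith),
    nhdsWithin_le_nhds (eventually_apply_lt p (half_pos he))] with x hx hlow hup
  -- `x = p + ∑ j, t j • (pure' j - p)` with `t = x - p + (e / 2) • p`
  set t : Fin k → ℝ := x - p + (e / 2) • p
  refine ⟨Fin.append (fun j => if pure' j = p then 0 else t j) 0, fun i => ?_, ?_⟩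
  · refine Fin.addCases (fun j => ?_) (fun j => ?_) i
    · simp only [Fin.append_left]
      split_ifs
      · exact ⟨le_rfl, he.le⟩
      · have := (mem_Icc_of_mem_stdSimplex hp j).2
        constructor <;> simp only [t, Pi.add_apply, Pi.sub_apply, Pi.smul_apply, smul_eq_mul] <;>
          nlinarith [hlow j, hup j]
    · simpa [Fin.append_right] using he.le
  · have hsum : ∑ j, t j = e / 2 := by
      simp [t, Finset.sum_add_distrib, Finset.sum_sub_distrib, ← Finset.mul_sum, hx.2, hp.2]
    have hterm : ∀ j, (if pure' j = p then 0 else t j) •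
        ((if pure' j = p then q₀ else pure' j) - p) = t j • (pure' j - p) := by
      intro j
      split_ifs with hj <;> simp [hj]
    rw [mix_eq, Fin.sum_univ_add]
    simp only [pureMutants, Fin.append_left, Fin.append_right, Pi.zero_apply, zero_smul,
      Finset.sum_const_zero, add_zero, hterm, sum_smul_pure'_sub, hsum]
    simp only [t]
    module

section Forward

variable {U : Fin k → Fin k → ℝ} {p : Fin k → ℝ}

theorem eventually_forall_payoff_le (hp : p ∈ Δ' k) {q₀ : Fin k → ℝ} (hq₀ : q₀ ∈ Δ' k)
    (hq₀p : q₀ ≠ p) (h : StableAgainst U (k + 2) p) :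
    ∀ᶠ x in 𝓝[Δ' k] p, ∀ s ∈ Δ' k, payoff U s x ≤ payoff U p x := by
  obtain ⟨e, he, hle⟩ := h.exists_payoff_le (pureMutants_mem hq₀) (pureMutants_ne hq₀p)
  filter_upwards [eventually_exists_mix_pureMutants_eq hp q₀ he] with x ⟨ε, hε, hx⟩ s hs
  subst hx
  refine payoff_le_of_forall_pure'_le U hs fun j => ?_
  by_cases hj : pure' j = p
  · rw [hj]
  · simpa [pureMutants_castAdd hj] using hle ε hε (Fin.castAdd 2 j)

theorem tendsto_add_two_smul_sub_nhdsWithin (hp : p ∈ Δ' k) :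
    Tendsto (fun x => p + (2 : ℝ) • (x - p)) (𝓝[Δ' k] p) (𝓝[Δ' k] p) := by
  refine tendsto_nhdsWithin_iff.2 ⟨?_, ?_⟩
  · have hcont : Continuous fun x : Fin k → ℝ => p + (2 : ℝ) • (x - p) := by fun_prop
    simpa using (hcont.tendsto p).mono_left nhdsWithin_le_nhds
  · filter_upwards [self_mem_nhdsWithin, eventually_mul_apply_le hp (c := 1 / 2) (by norm_num)]
      with x hx hlow
    refine ⟨fun j => ?_, ?_⟩
    · simp only [Pi.add_apply, Pi.smul_apply, Pi.sub_apply, smul_eq_mul]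
      linarith [hlow j]
    · simp [Finset.sum_add_distrib, Finset.sum_sub_distrib, ← Finset.mul_sum, hx.2, hp.2]

theorem eventually_payoff_self_lt (hp : p ∈ Δ' k) (h : StableAgainst U 2 p)
    (hweak : ∀ᶠ x in 𝓝[Δ' k] p, ∀ s ∈ Δ' k, payoff U s x ≤ payoff U p x) :
    ∀ᶠ x in 𝓝[Δ' k] p, x ≠ p → payoff U x x < payoff U p x := by
  have hy := tendsto_add_two_smul_sub_nhdsWithin hp
  filter_upwards [hy.eventually self_mem_nhdsWithin, hy.eventually hweak] with x hyΔ hyweak hxp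
  set y := p + (2 : ℝ) • (x - p)
  have hyp : y ≠ p := add_smul_sub_ne hxp two_ne_zero
  have hx : x = p + (1 / 2 : ℝ) • (y - p) := by simp only [y]; module
  clear_value y
  obtain ⟨e, he, hlt⟩ := h (fun _ => y) (fun _ => hyΔ) (fun _ => hyp)
  set η := min e (1 / 4)
  have hη : 0 < η := lt_min he.1 (by norm_num)
  have hinv := hlt (fun _ => η) (fun _ => ⟨hη, min_le_left _ _⟩) 0
  rw [mix_const, gt_iff_lt, payoff_segment_right, payoff_segment_right] at hinv
  have hyy := hyweak y hyΔ
  have hxx := payoff_segment_left U p y x (1 / 2)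
  have hyx := payoff_segment_right U y p y (1 / 2)
  have hpx := payoff_segment_right U p p y (1 / 2)
  rw [← hx] at hxx hyx hpx
  have hmid := add_half_mul_neg (a := payoff U y p - payoff U p p)
    (b := payoff U y y - payoff U p y - (payoff U y p - payoff U p p)) (t := 2 * η)
    (by linarith) (by positivity) (by linarith [min_le_right e (1 / 4)])
    (by push_cast at hinv; linarith)
  linarith

theorem locallyDominant_of_eventually
    (h : ∀ᶠ x in 𝓝[Δ' k] p, (∀ s ∈ Δ' k, payoff U s x ≤ payoff U p x) ∧
      (x ≠ p → payoff U x x < payoff U p x)) :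
    LocallyDominant U p :=
  ⟨_, inter_mem self_mem_nhdsWithin h, inter_subset_left,
    fun s hs _ _ hx hxp => ⟨hx.2.1 s hs.1, hx.2.2 hxp⟩⟩

theorem locallyDominant_of_stableAgainst (hp : p ∈ Δ' k)
    (h : ∀ m : ℕ, 2 ≤ m → StableAgainst U m p) : LocallyDominant U p := by
  refine locallyDominant_of_eventually ?_
  by_cases hΔ : ∃ q₀ ∈ Δ' k, q₀ ≠ p
  · obtain ⟨q₀, hq₀, hq₀p⟩ := hΔ
    have hweak := eventually_forall_payoff_le hp hq₀ hq₀p (h (k + 2) (by omega))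
    exact hweak.and (eventually_payoff_self_lt hp (h 2 le_rfl) hweak)
  · push Not at hΔ
    filter_upwards [self_mem_nhdsWithin] with x hx
    exact ⟨fun s hs => by rw [hΔ s hs, hΔ x hx], fun hxp => absurd (hΔ x hx) hxp⟩

end Forward

end Strategies

theorem stmt_6 {k : ℕ} (U : Fin k → Fin k → ℝ) (p : Fin k → ℝ) (hp : p ∈ Δ' k) :
    (∀ m : ℕ, 2 ≤ m → StableAgainst U m p) ↔ LocallyDominant U p :=
  ⟨locallyDominant_of_stableAgainst hp, fun h m _ => h.stableAgainst hp m⟩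
end
end

section
/- If p is locally dominant, then p is an ESS and moreover u(p,r) ≥ u(q,r) for every q ∈ BR(p)\{p} and every r ∈ Δ. -/
open Finset Set

noncomputable section

open Filter Topology

/-! Along a segment `w = εr + (1 - ε)p` the payoffs are affine in `ε`, and for small `ε > 0`
the point `w` lies in the dominance neighbourhood. Dominance `u(p,w) > u(w,w)` is then exactly the
ESS inequality. For a best reply `q ≠ p`, dominance at `s = tq + (1 - t)p` against
`w = σr + (1 - σ)p` gives `u(q,w) ≤ u(p,w)` by linearity in the first argument; expanding in the
second, the `p`-component weakly favours `q`, so the `r`-component must favour `p`. For `r = p`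
one uses instead that an ESS is a Nash equilibrium (let `ε → 0` in the ESS inequality). -/

/-- Definitionally the population state `εr + (1 - ε)p` of `IsESS`. -/
def perturb {k : ℕ} (p r : Fin k → ℝ) (ε : ℝ) : Fin k → ℝ := fun j => ε * r j + (1 - ε) * p j

section

variable {k : ℕ} {p r : Fin k → ℝ}

lemma payoff_perturb_left (U : Fin k → Fin k → ℝ) (ε : ℝ) (q : Fin k → ℝ) :
    payoff U (perturb p r ε) q = ε * payoff U r q + (1 - ε) * payoff U p q := by
  simp only [payoff, perturb, Finset.mul_sum, ← Finset.sum_add_distrib]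
  exact Finset.sum_congr rfl fun i _ => Finset.sum_congr rfl fun j _ => by ring

lemma payoff_perturb_right (U : Fin k → Fin k → ℝ) (ε : ℝ) (x : Fin k → ℝ) :
    payoff U x (perturb p r ε) = ε * payoff U x r + (1 - ε) * payoff U x p := by
  simp only [payoff, perturb, Finset.mul_sum, ← Finset.sum_add_distrib]
  exact Finset.sum_congr rfl fun i _ => Finset.sum_congr rfl fun j _ => by ring

lemma perturb_mem_Δ' (hp : p ∈ Δ' k) (hr : r ∈ Δ' k) {ε : ℝ} (h0 : 0 ≤ ε) (h1 : ε ≤ 1) :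
    perturb p r ε ∈ Δ' k := by
  have h : ε • r + (1 - ε) • p ∈ Δ' k :=
    convex_stdSimplex ℝ (Fin k) hr hp h0 (sub_nonneg.mpr h1) (add_sub_cancel ε 1)
  convert h using 1
  ext j
  simp [perturb]

lemma perturb_ne (hrp : r ≠ p) {ε : ℝ} (hε : ε ≠ 0) : perturb p r ε ≠ p := by
  obtain ⟨j, hj⟩ := Function.ne_iff.mp hrp
  intro heq
  have hj' : ε * r j + (1 - ε) * p j = p j := congrFun heq j
  have h : ε * (r j - p j) = 0 := by linear_combination hj'
  exact hj (sub_eq_zero.mp ((mul_eq_zero.mp h).resolve_left hε))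

lemma continuous_perturb : Continuous (perturb p r) :=
  continuous_pi fun j => by unfold perturb; fun_prop

lemma perturb_zero : perturb p r 0 = p := by
  ext j
  simp [perturb]

lemma tendsto_perturb (hp : p ∈ Δ' k) (hr : r ∈ Δ' k) :
    Tendsto (perturb p r) (𝓝[>] 0) (𝓝[Δ' k] p) := by
  refine tendsto_nhdsWithin_iff.mpr ⟨?_, ?_⟩
  · simpa [perturb_zero] using continuous_perturb.continuousAt.tendsto.mono_left
      (nhdsWithin_le_nhds (a := (0 : ℝ)) (s := Ioi 0))
  · filter_upwards [Ioc_mem_nhdsGT one_pos] with ε hε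
    exact perturb_mem_Δ' hp hr hε.1.le hε.2

lemma eventually_perturb_mem {V : Set (Fin k → ℝ)} (hV : V ∈ 𝓝[Δ' k] p) (hp : p ∈ Δ' k)
    (hr : r ∈ Δ' k) (hrp : r ≠ p) :
    ∀ᶠ ε in 𝓝[>] 0, perturb p r ε ∈ V ∧ perturb p r ε ≠ p := by
  filter_upwards [tendsto_perturb hp hr hV, self_mem_nhdsWithin] with ε hmem hε
  exact ⟨hmem, perturb_ne hrp (ne_of_gt hε)⟩

end

lemma exists_Ioo_of_eventually_nhdsGT {P : ℝ → Prop} (h : ∀ᶠ ε in 𝓝[>] 0, P ε) :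
    ∃ e ∈ Ioo (0 : ℝ) 1, ∀ ε, 0 < ε → ε ≤ e → P ε := by
  obtain ⟨u, hu, hsub⟩ := (mem_nhdsGT_iff_exists_Ioc_subset).mp h
  refine ⟨min u (1 / 2), ⟨lt_min hu (by norm_num), by linarith [min_le_right u (1 / 2)]⟩, ?_⟩
  exact fun ε h0 h1 => hsub ⟨h0, h1.trans (min_le_left _ _)⟩

section

variable {k : ℕ} {U : Fin k → Fin k → ℝ} {p : Fin k → ℝ}

theorem LocallyDominant.isESS (hp : p ∈ Δ' k) (h : LocallyDominant U p) : IsESS U p := by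
  obtain ⟨V, hV, -, hdom⟩ := h
  refine ⟨hp, fun r hr hrp => exists_Ioo_of_eventually_nhdsGT ?_⟩
  filter_upwards [eventually_perturb_mem hV hp hr hrp, self_mem_nhdsWithin]
    with ε ⟨hmem, hne⟩ (hε : 0 < ε)
  have hgt := (hdom _ hmem hne _ hmem hne).2
  rw [payoff_perturb_left] at hgt
  show payoff U r (perturb p r ε) < payoff U p (perturb p r ε)
  exact lt_of_mul_lt_mul_left (by linarith) hε.le

theorem IsESS.payoff_le_payoff_self (h : IsESS U p) {q : Fin k → ℝ} (hq : q ∈ Δ' k) :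
    payoff U q p ≤ payoff U p p := by
  rcases eq_or_ne q p with rfl | hqp
  · exact le_rfl
  obtain ⟨e, he, hlt⟩ := h.2 q hq hqp
  have hlim : ∀ x, Tendsto (fun ε => payoff U x (perturb p q ε)) (𝓝[>] 0) (𝓝 (payoff U x p)) :=
    fun x => by
      simp_rw [payoff_perturb_right]
      refine tendsto_nhdsWithin_of_tendsto_nhds ?_
      exact Continuous.tendsto' (by fun_prop) 0 _ (by simp)
  refine le_of_tendsto_of_tendsto (hlim q) (hlim p) ?_
  filter_upwards [Ioc_mem_nhdsGT he.1] with ε hε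
  exact (hlt ε hε.1 hε.2).le

theorem LocallyDominant.payoff_le_of_mem_BR (hp : p ∈ Δ' k) (h : LocallyDominant U p)
    {q r : Fin k → ℝ} (hq : q ∈ BR U p) (hqp : q ≠ p) (hr : r ∈ Δ' k) (hrp : r ≠ p) :
    payoff U q r ≤ payoff U p r := by
  obtain ⟨V, hV, -, hdom⟩ := h
  obtain ⟨t, ⟨hsV, hsp⟩, ht⟩ :=
    ((eventually_perturb_mem hV hp hq.1 hqp).and self_mem_nhdsWithin).exists
  obtain ⟨σ, ⟨hwV, hwp⟩, hσ⟩ :=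
    ((eventually_perturb_mem hV hp hr hrp).and (Ioo_mem_nhdsGT one_pos)).exists
  have hdom_w := (hdom _ hsV hsp _ hwV hwp).1
  rw [payoff_perturb_left] at hdom_w
  have hw : payoff U q (perturb p r σ) ≤ payoff U p (perturb p r σ) :=
    le_of_mul_le_mul_left (by linarith) (show (0 : ℝ) < t from ht)
  rw [payoff_perturb_right, payoff_perturb_right] at hw
  have hbr : 0 ≤ (1 - σ) * (payoff U q p - payoff U p p) :=
    mul_nonneg (sub_nonneg.mpr hσ.2.le) (sub_nonneg.mpr (hq.2 p hp))
  exact le_of_mul_le_mul_left (by linarith) hσ.1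

end

theorem stmt_7 {k : ℕ} (U : Fin k → Fin k → ℝ) (p : Fin k → ℝ) (hp : p ∈ Δ' k)
    (h : LocallyDominant U p) :
    IsESS U p ∧ ∀ q ∈ BR U p, q ≠ p → ∀ r ∈ Δ' k, payoff U p r ≥ payoff U q r := by
  have hESS := h.isESS hp
  refine ⟨hESS, fun q hq hqp r hr => ?_⟩
  rcases eq_or_ne r p with rfl | hrp
  · exact hESS.payoff_le_payoff_self hq.1
  · exact h.payoff_le_of_mem_BR hp hq hqp hr hrp
end
end

section
/- Every strict symmetric Nash equilibrium is strictly locally dominant. -/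
open Finset Set

noncomputable section

/-!
A strict symmetric Nash equilibrium `p` is pure: since `u(p, p)` is the `p`-average of the
`u(eᵢ, p)`, some pure strategy `eᵢ` is a best reply to `p`, and strictness forces `eᵢ = p`.
For `p = eᵢ` the finitely many strict inequalities `u(eⱼ, eᵢ) < u(eᵢ, eᵢ)`, `j ≠ i`, persist for
`r` near `eᵢ` by continuity; as `u(s, r)` is the `s`-average of the `u(eⱼ, r)`, every mixed
`s ≠ eᵢ` then earns strictly less than `eᵢ` against such `r`.
-/

open Filter Topology

lemma payoff_eq_sum_payoff_pure' {k : ℕ} (U : Fin k → Fin k → ℝ) (s r : Fin k → ℝ) :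
    payoff U s r = ∑ i, s i * payoff U (pure' i) r := by
  have hpure : ∀ i, payoff U (pure' i) r = ∑ j, r j * U i j := fun i => by
    simp [payoff, pure']
  simp only [hpure, Finset.mul_sum]
  unfold payoff
  exact Finset.sum_congr rfl fun i _ => Finset.sum_congr rfl fun j _ => by ring

lemma pure'_mem_Δ' {k : ℕ} (i : Fin k) : pure' i ∈ Δ' k :=
  ⟨fun j => by unfold pure'; positivity, by simp [pure']⟩

lemma pure'_injective {k : ℕ} : Function.Injective (pure' (k := k)) := by
  intro i j h
  simpa [pure'] using congrFun h i

lemma eq_pure'_of_forall_ne_eq_zero {k : ℕ} {s : Fin k → ℝ} (hs : s ∈ Δ' k) (i : Fin k)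
    (hzero : ∀ j ≠ i, s j = 0) : s = pure' i := by
  have hsi : s i = 1 := by
    rw [← hs.2, Finset.sum_eq_single i (fun j _ hj => hzero j hj) (by simp)]
  funext j
  by_cases hj : j = i
  · simp [pure', hj, hsi]
  · simp [pure', hj, hzero j hj]

lemma continuous_payoff {k : ℕ} (U : Fin k → Fin k → ℝ) (s : Fin k → ℝ) :
    Continuous (payoff U s) := by
  unfold payoff
  fun_prop

lemma exists_payoff_le_payoff_pure' {k : ℕ} (U : Fin k → Fin k → ℝ) {s : Fin k → ℝ}
    (hs : s ∈ Δ' k) (r : Fin k → ℝ) : ∃ i, payoff U s r ≤ payoff U (pure' i) r := by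
  have hne : (Finset.univ : Finset (Fin k)).Nonempty := by
    by_contra h
    simpa [Finset.not_nonempty_iff_eq_empty.mp h] using hs.2
  obtain ⟨i, -, hi⟩ := Finset.exists_max_image Finset.univ (fun j => payoff U (pure' j) r) hne
  refine ⟨i, ?_⟩
  calc payoff U s r = ∑ j, s j * payoff U (pure' j) r := payoff_eq_sum_payoff_pure' U s r
    _ ≤ ∑ j, s j * payoff U (pure' i) r :=
        Finset.sum_le_sum fun j hj => mul_le_mul_of_nonneg_left (hi j hj) (hs.1 j)
    _ = payoff U (pure' i) r := by rw [← Finset.sum_mul, hs.2, one_mul]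

lemma exists_eq_pure'_of_strict_nash {k : ℕ} (U : Fin k → Fin k → ℝ) {p : Fin k → ℝ}
    (hp : p ∈ Δ' k) (hstrict : ∀ q ∈ Δ' k, q ≠ p → payoff U p p > payoff U q p) :
    ∃ i, p = pure' i := by
  obtain ⟨i, hi⟩ := exists_payoff_le_payoff_pure' U hp p
  by_contra! hne
  exact (hstrict (pure' i) (pure'_mem_Δ' i) (hne i).symm).not_ge hi

lemma payoff_lt_payoff_pure' {k : ℕ} (U : Fin k → Fin k → ℝ) {i : Fin k} {r : Fin k → ℝ}
    (hr : ∀ j ≠ i, payoff U (pure' j) r < payoff U (pure' i) r)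
    {s : Fin k → ℝ} (hs : s ∈ Δ' k) (hsi : s ≠ pure' i) :
    payoff U s r < payoff U (pure' i) r := by
  obtain ⟨j, hji, hsj⟩ : ∃ j ≠ i, s j ≠ 0 := by
    by_contra! h
    exact hsi (eq_pure'_of_forall_ne_eq_zero hs i h)
  have hle : ∀ l, s l * payoff U (pure' l) r ≤ s l * payoff U (pure' i) r := fun l => by
    rcases eq_or_ne l i with rfl | hl
    · rfl
    · exact mul_le_mul_of_nonneg_left (hr l hl).le (hs.1 l)
  calc payoff U s r = ∑ l, s l * payoff U (pure' l) r := payoff_eq_sum_payoff_pure' U s r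
    _ < ∑ l, s l * payoff U (pure' i) r :=
        Finset.sum_lt_sum (fun l _ => hle l) ⟨j, Finset.mem_univ j,
          mul_lt_mul_of_pos_left (hr j hji) ((hs.1 j).lt_of_ne' hsj)⟩
    _ = payoff U (pure' i) r := by rw [← Finset.sum_mul, hs.2, one_mul]

lemma strictlyLocallyDominant_pure' {k : ℕ} (U : Fin k → Fin k → ℝ) (i : Fin k)
    (h : ∀ j ≠ i, payoff U (pure' j) (pure' i) < payoff U (pure' i) (pure' i)) :
    StrictlyLocallyDominant U (pure' i) := by
  have hW : ∀ᶠ r in 𝓝 (pure' i), ∀ j ≠ i, payoff U (pure' j) r < payoff U (pure' i) r :=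
    eventually_all.2 fun j => by
      rcases eq_or_ne j i with rfl | hj
      · exact Eventually.of_forall fun _ hne => absurd rfl hne
      · exact ((continuous_payoff U _).tendsto _).eventually_lt
          ((continuous_payoff U _).tendsto _) (h j hj) |>.mono fun _ hr _ => hr
  refine ⟨Δ' k ∩ {r | ∀ j ≠ i, payoff U (pure' j) r < payoff U (pure' i) r},
    inter_mem_nhdsWithin _ hW, inter_subset_left, ?_⟩
  rintro s ⟨hs, -⟩ hsi r ⟨-, hr⟩ -
  exact payoff_lt_payoff_pure' U hr hs hsi

theorem stmt_8 {k : ℕ} (U : Fin k → Fin k → ℝ) (p : Fin k → ℝ) (hp : p ∈ Δ' k)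
    (hstrict : ∀ q ∈ Δ' k, q ≠ p → payoff U p p > payoff U q p) :
    StrictlyLocallyDominant U p := by
  obtain ⟨i, rfl⟩ := exists_eq_pure'_of_strict_nash U hp hstrict
  exact strictlyLocallyDominant_pure' U i fun j hj =>
    hstrict (pure' j) (pure'_mem_Δ' j) (pure'_injective.ne hj)
end
end

section
/- In the 2×2 symmetric game with payoff matrix U = [[-1,0],[0,0]], the pure strategy e² is not a strict symmetric Nash equilibrium (indeed BR(e²) = Δ), yet e² satisfies: u(e²,q) > u(q,q) for all q ≠ e², and u(e²,r) > u(q,r) for all q,r ≠ e². Consequently e² is evolutionarily stable against m mutations for every m ≥ 1. -/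
open Finset Set

noncomputable section

/-!
Against `e² = ![0, 1]` every strategy earns `0`, so `e²` is a best reply to itself but not a strict
one. For strategies `q, r` of the simplex, however, `u(e², r) = 0` while `u(q, r) = -q₁r₁` (`q₁` is `q 0`),
which is negative as soon as `q ≠ e²` and `r ≠ e²`. A population state `w` containing a positive share of
mutants `rⁱ ≠ e²` has `w₁ > 0`, however small the shares, so every invasion barrier works.
-/

lemma payoff_negSingleEntry (p q : Fin 2 → ℝ) :
    payoff ![![-1, 0], ![0, 0]] p q = -(p 0 * q 0) := by
  simp [payoff, Fin.sum_univ_two]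

lemma payoff_negSingleEntry_lt {q r : Fin 2 → ℝ} (hq : 0 < q 0) (hr : 0 < r 0) :
    payoff ![![-1, 0], ![0, 0]] q r < payoff ![![-1, 0], ![0, 0]] ![0, 1] r := by
  rw [payoff_negSingleEntry, payoff_negSingleEntry]
  simpa using mul_pos hq hr

lemma Δ'_two_apply_zero_pos {q : Fin 2 → ℝ} (hq : q ∈ Δ' 2) (hne : q ≠ ![0, 1]) : 0 < q 0 := by
  obtain ⟨hnonneg, hsum⟩ := hq
  refine (hnonneg 0).lt_of_ne fun h0 => hne ?_
  have hsum : q 0 + q 1 = 1 := by simpa [Fin.sum_univ_two] using hsum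
  ext i
  fin_cases i
  · simp [← h0]
  · simp only [Fin.mk_one, Fin.isValue, Matrix.cons_val_one, Matrix.cons_val_fin_one]
    linarith

lemma BR_eq_of_payoff_const {k : ℕ} {U : Fin k → Fin k → ℝ} {p : Fin k → ℝ} {c : ℝ}
    (h : ∀ q, payoff U q p = c) : BR U p = Δ' k := by
  ext q
  simp [BR, h]

lemma mix_apply_pos {k m : ℕ} {p : Fin k → ℝ} {r : Fin m → Fin k → ℝ} {ε : Fin m → ℝ} {j : Fin k}
    (hp : p j = 0) (hε : ∀ i, 0 < ε i) (hr : ∀ i, 0 ≤ r i j) {i : Fin m} (hi : 0 < r i j) :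
    0 < mix p r ε j := by
  simp only [mix, hp, mul_zero, add_zero]
  exact Finset.sum_pos' (fun l _ => mul_nonneg (hε l).le (hr l))
    ⟨i, Finset.mem_univ i, mul_pos (hε i) hi⟩

lemma StableAgainst.of_uniformBarrier {k m : ℕ} {U : Fin k → Fin k → ℝ} {p : Fin k → ℝ} {e : ℝ}
    (he : e ∈ Set.Ioo 0 1) (h : UniformBarrier U m p e) : StableAgainst U m p :=
  fun r hr hne => ⟨e, he, h r hr hne⟩

lemma uniformBarrier_negSingleEntry (m : ℕ) (e : ℝ) :
    UniformBarrier ![![-1, 0], ![0, 0]] m ![0, 1] e := by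
  intro r hr hne ε hε i
  have hr0 : ∀ l, 0 < r l 0 := fun l => Δ'_two_apply_zero_pos (hr l) (hne l)
  exact payoff_negSingleEntry_lt (hr0 i)
    (mix_apply_pos rfl (fun l => (hε l).1) (fun l => (hr0 l).le) (hr0 i))

theorem stmt_9 :
    let U : Fin 2 → Fin 2 → ℝ := ![![-1, 0], ![0, 0]]
    let e2 : Fin 2 → ℝ := ![0, 1]
    (BR U e2 = Δ' 2) ∧
    ¬ (∀ q ∈ Δ' 2, q ≠ e2 → payoff U e2 e2 > payoff U q e2) ∧
    (∀ q ∈ Δ' 2, q ≠ e2 → payoff U e2 q > payoff U q q) ∧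
    (∀ q ∈ Δ' 2, ∀ r ∈ Δ' 2, q ≠ e2 → r ≠ e2 → payoff U e2 r > payoff U q r) ∧
    (∀ m : ℕ, 1 ≤ m → StableAgainst U m e2) := by
  intro U e2
  have payoff_e2 : ∀ q, payoff U q e2 = 0 := fun q => by simp [U, e2, payoff_negSingleEntry]
  refine ⟨BR_eq_of_payoff_const payoff_e2, fun h => ?_, fun q hq hne => ?_,
    fun q hq r hr hqe hre => ?_, fun m _ => ?_⟩
  · have he1 : (![1, 0] : Fin 2 → ℝ) ∈ Δ' 2 := by simp [Δ', stdSimplex, Fin.forall_fin_two]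
    have := h ![1, 0] he1 (by simp [e2])
    simp [payoff_e2] at this
  · have hq0 := Δ'_two_apply_zero_pos hq hne
    exact payoff_negSingleEntry_lt hq0 hq0
  · exact payoff_negSingleEntry_lt (Δ'_two_apply_zero_pos hq hqe) (Δ'_two_apply_zero_pos hr hre)
  · exact .of_uniformBarrier (e := 1 / 2) (by norm_num) (uniformBarrier_negSingleEntry m _)
end
end

section
/- If a strategy p is evolutionarily stable against multiple mutations, then p is a pure strategy (p = eⁱ for some i). -/
open Finset Set

noncomputable section

/-!
A mixed strategy `p` has two coordinates of positive mass, so it is the midpoint of two distinct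
strategies `p + v` and `p - v`. Letting both invade in equal proportions leaves the population
state equal to `p`; stability would then make `p` a strictly better reply to `p` than both
`p + v` and `p - v`, which is impossible because the payoff is affine in the first argument.
-/

theorem payoff_add_left {k : ℕ} (U : Fin k → Fin k → ℝ) (p v q : Fin k → ℝ) :
    payoff U (p + v) q = payoff U p q + payoff U v q := by
  simp only [payoff, Pi.add_apply, add_mul, Finset.sum_add_distrib]

theorem payoff_sub_left {k : ℕ} (U : Fin k → Fin k → ℝ) (p v q : Fin k → ℝ) :
    payoff U (p - v) q = payoff U p q - payoff U v q := by
  simp only [payoff, Pi.sub_apply, sub_mul, Finset.sum_sub_distrib]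

theorem mix_add_sub {k : ℕ} (p v : Fin k → ℝ) (e : ℝ) :
    mix p ![p + v, p - v] (fun _ => e) = p := by
  funext j
  simp only [mix, Fin.sum_univ_two, Matrix.cons_val_zero, Matrix.cons_val_one, Pi.add_apply,
    Pi.sub_apply]
  ring

theorem not_stableAgainst_two_of_add_sub_mem {k : ℕ} (U : Fin k → Fin k → ℝ) {p v : Fin k → ℝ}
    (hv : v ≠ 0) (hplus : p + v ∈ Δ' k) (hminus : p - v ∈ Δ' k) : ¬ StableAgainst U 2 p := by
  intro hstable
  obtain ⟨e, ⟨he, -⟩, hbarrier⟩ := hstable ![p + v, p - v]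
    (Fin.forall_fin_two.2 ⟨hplus, hminus⟩)
    (Fin.forall_fin_two.2 ⟨fun h => hv (add_eq_left.1 h), fun h => hv (sub_eq_self.1 h)⟩)
  have hbeat := hbarrier (fun _ => e) fun _ => ⟨he, le_rfl⟩
  rw [mix_add_sub] at hbeat
  have hplus_worse := hbeat 0
  have hminus_worse := hbeat 1
  simp only [Matrix.cons_val_zero, Matrix.cons_val_one, payoff_add_left, payoff_sub_left]
    at hplus_worse hminus_worse
  linarith

theorem exists_pos_pos_of_ne_pure {k : ℕ} {p : Fin k → ℝ} (hp : p ∈ Δ' k)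
    (hpure : ∀ i, p ≠ pure' i) : ∃ a b, a ≠ b ∧ 0 < p a ∧ 0 < p b := by
  obtain ⟨hnonneg, hsum⟩ := hp
  obtain ⟨a, -, ha⟩ := Finset.exists_ne_zero_of_sum_ne_zero (hsum.trans_ne one_ne_zero)
  have hpos : 0 < p a := (hnonneg a).lt_of_ne' ha
  by_contra! hsupp
  have hzero : ∀ b, b ≠ a → p b = 0 := fun b hb =>
    le_antisymm (hsupp a b hb.symm hpos) (hnonneg b)
  have hpa : p a = 1 := by
    rw [← hsum, Finset.sum_eq_single a (fun b _ hb => hzero b hb) (by simp)]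
  exact hpure a (funext fun j => by by_cases hj : j = a <;> simp [pure', hj, hpa, hzero])

theorem add_mem_Δ' {k : ℕ} {p v : Fin k → ℝ} (hp : p ∈ Δ' k) (hsum : ∑ j, v j = 0)
    (hle : ∀ j, |v j| ≤ p j) : p + v ∈ Δ' k :=
  ⟨fun j => by
    have := neg_abs_le (v j)
    simp only [Pi.add_apply]
    linarith [hle j],
   by simp only [Pi.add_apply, Finset.sum_add_distrib, hp.2, hsum, add_zero]⟩

theorem exists_add_sub_mem_of_ne_pure {k : ℕ} {p : Fin k → ℝ} (hp : p ∈ Δ' k)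
    (hpure : ∀ i, p ≠ pure' i) : ∃ v ≠ 0, p + v ∈ Δ' k ∧ p - v ∈ Δ' k := by
  obtain ⟨a, b, hab, ha, hb⟩ := exists_pos_pos_of_ne_pure hp hpure
  obtain ⟨δ, hδ, hδa, hδb⟩ : ∃ δ : ℝ, 0 < δ ∧ δ ≤ p a ∧ δ ≤ p b :=
    ⟨min (p a) (p b), lt_min ha hb, min_le_left _ _, min_le_right _ _⟩
  set v : Fin k → ℝ := Pi.single a δ - Pi.single b δ
  have hsum : ∑ j, v j = 0 := by simp [v, Finset.sum_sub_distrib]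
  have hle : ∀ j, |v j| ≤ p j := by
    intro j
    rcases eq_or_ne j a with rfl | hja
    · simpa [v, hab, abs_of_pos hδ] using hδa
    rcases eq_or_ne j b with rfl | hjb
    · simpa [v, hja, abs_of_pos hδ] using hδb
    simpa [v, hja, hjb] using hp.1 j
  have hv : v ≠ 0 := fun h => hδ.ne' (by simpa [v, hab] using congrFun h a)
  refine ⟨v, hv, add_mem_Δ' hp hsum hle, ?_⟩
  simpa [sub_eq_add_neg] using add_mem_Δ' (v := -v) hp (by simp [hsum]) (by simpa using hle)

theorem stmt_10 {k : ℕ} (U : Fin k → Fin k → ℝ) (p : Fin k → ℝ) (hp : p ∈ Δ' k)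
    (h : ∀ m : ℕ, 2 ≤ m → StableAgainst U m p) :
    ∃ i : Fin k, p = pure' i := by
  by_contra! hpure
  obtain ⟨v, hv, hplus, hminus⟩ := exists_add_sub_mem_of_ne_pure hp hpure
  exact not_stableAgainst_two_of_add_sub_mem U hv hplus hminus (h 2 le_rfl)
end
end

section
/- If p is an ESS and for every q ∈ BR(p)\{p} and every r ∈ Δ one has u(p,r) ≥ u(q,r), then for each fixed pair of mutations r¹, r² ≠ p with r¹ ∈ BR(p), the function h₁(ε₁,ε₂) = u(p,w) - u(r¹,w), where w = ε₁r¹+ε₂r²+(1-ε₁-ε₂)p, is strictly positive for all ε₁,ε₂ > 0 with ε₁+ε₂ ≤ 1. -/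
/-!
Payoff is linear in the opponent's strategy, so with `w = ε₁r¹ + ε₂r² + (1-ε₁-ε₂)p`,
`u(p,w) - u(r¹,w) = ε₁(u(p,r¹) - u(r¹,r¹)) + ε₂(u(p,r²) - u(r¹,r²)) + (1-ε₁-ε₂)(u(p,p) - u(r¹,p))`.
The first term is positive by the ESS condition for `r¹ ∈ BR(p)`, the second is nonnegative by
the dominance hypothesis, and the third vanishes since `p` and `r¹` are both best responses to `p`.
-/

open Finset Set

noncomputable section

theorem payoff_linear_combination_right {k : ℕ} (U : Fin k → Fin k → ℝ) (x r s t : Fin k → ℝ)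
    (a b c : ℝ) :
    payoff U x (fun j => a * r j + b * s j + c * t j) =
      a * payoff U x r + b * payoff U x s + c * payoff U x t := by
  simp only [payoff, Finset.mul_sum, ← Finset.sum_add_distrib]
  exact Finset.sum_congr rfl fun i _ => Finset.sum_congr rfl fun j _ => by ring

theorem payoff_eq_of_mem_BR_self {k : ℕ} {U : Fin k → Fin k → ℝ} {p q : Fin k → ℝ}
    (hp : p ∈ BR U p) (hq : q ∈ BR U p) : payoff U q p = payoff U p p :=
  le_antisymm (hp.2 q hq.1) (hq.2 p hp.1)

theorem stmt_14_general {k : ℕ} (U : Fin k → Fin k → ℝ) (p : Fin k → ℝ)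
    (hNE : p ∈ BR U p)
    (hESS : ∀ q ∈ BR U p, q ≠ p → payoff U p q > payoff U q q)
    (hdom : ∀ q ∈ BR U p, q ≠ p → ∀ r ∈ Δ' k, payoff U p r ≥ payoff U q r)
    (r1 r2 : Fin k → ℝ) (hr2 : r2 ∈ Δ' k)
    (hr1p : r1 ≠ p) (hr1BR : r1 ∈ BR U p) :
    ∀ ε1 ε2 : ℝ, 0 < ε1 → 0 < ε2 → ε1 + ε2 ≤ 1 →
      payoff U p (fun j => ε1 * r1 j + ε2 * r2 j + (1 - ε1 - ε2) * p j) -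
        payoff U r1 (fun j => ε1 * r1 j + ε2 * r2 j + (1 - ε1 - ε2) * p j) > 0 := by
  intro ε1 ε2 hε1 hε2 _
  rw [payoff_linear_combination_right, payoff_linear_combination_right,
    payoff_eq_of_mem_BR_self hNE hr1BR]
  have hfirst : 0 < ε1 * (payoff U p r1 - payoff U r1 r1) :=
    mul_pos hε1 (sub_pos.2 (hESS r1 hr1BR hr1p))
  have hsecond : 0 ≤ ε2 * (payoff U p r2 - payoff U r1 r2) :=
    mul_nonneg hε2.le (sub_nonneg.2 (hdom r1 hr1BR hr1p r2 hr2))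
  linarith

theorem stmt_14 {k : ℕ} (U : Fin k → Fin k → ℝ) (p : Fin k → ℝ)
    (hNE : p ∈ BR U p)
    (hESS : ∀ q ∈ BR U p, q ≠ p → payoff U p q > payoff U q q)
    (hdom : ∀ q ∈ BR U p, q ≠ p → ∀ r ∈ Δ' k, payoff U p r ≥ payoff U q r)
    (r1 r2 : Fin k → ℝ) (hr1 : r1 ∈ Δ' k) (hr2 : r2 ∈ Δ' k)
    (hr1p : r1 ≠ p) (hr2p : r2 ≠ p) (hr1BR : r1 ∈ BR U p) :
    ∀ ε1 ε2 : ℝ, 0 < ε1 → 0 < ε2 → ε1 + ε2 ≤ 1 →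
      payoff U p (fun j => ε1 * r1 j + ε2 * r2 j + (1 - ε1 - ε2) * p j) -
        payoff U r1 (fun j => ε1 * r1 j + ε2 * r2 j + (1 - ε1 - ε2) * p j) > 0 :=
  stmt_14_general U p hNE hESS hdom r1 r2 hr2 hr1p hr1BR
end
end
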